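/- Let v_1, …, v_n be vectors spanning ℂ^d, let ρ = ∑_{i=1}^{n} v_i v_iᴴ (a positive definite d×d matrix), and let G be the n×n Gram matrix with G_{ij} = ⟨v_i, v_j⟩. Then the n×n matrix M with entries M_{ij} = ⟨v_i, ρ^{−1/2} v_j⟩ is positive semidefinite and satisfies M² = G; consequently M = √G. -/

import Mathlib

open Matrix
open scoped ComplexOrder

/-- The positive semidefinite square root of a positive semidefinite matrix
(the definition `Matrix.PosSemidef.sqrt` of the older Mathlib, since removed). -/
noncomputable def Matrix.PosSemidef.sqrt {n : Type*} [Fintype n] [DecidableEq n] {𝕜 : Type*} [RCLike 𝕜]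
    {A : Matrix n n 𝕜} (hA : A.PosSemidef) : Matrix n n 𝕜 :=
  hA.1.eigenvectorUnitary.1 * diagonal ((↑) ∘ (fun x : ℝ => √x) ∘ hA.1.eigenvalues) *
    (star hA.1.eigenvectorUnitary : Matrix n n 𝕜)

/-!
Write `V` for the `d × n` matrix with columns `v i`. Then `ρ = V Vᴴ`, `G = Vᴴ V` and
`M = Vᴴ ρ^{-1/2} V`. The matrix `M` is a congruence of the positive semidefinite `ρ^{-1/2}`, and
`M² = Vᴴ (ρ^{-1/2} V Vᴴ ρ^{-1/2}) V = Vᴴ V = G`; uniqueness of positive semidefinite square roots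
gives `M = √G`.
-/

namespace Matrix

section ColumnMatrix

variable {ι m 𝕜 : Type*} [RCLike 𝕜]

theorem sum_vecMulVec_self_star [Fintype ι] (v : ι → m → 𝕜) :
    ∑ i, vecMulVec (v i) (star (v i)) = (of v)ᵀ * ((of v)ᵀ)ᴴ := by
  ext k l
  simp only [sum_apply, vecMulVec_apply, mul_apply, transpose_apply, conjTranspose_apply,
    of_apply, Pi.star_apply]

theorem conjTranspose_mul_mul_apply_of_transpose [Fintype m] (v : ι → m → 𝕜)
    (S : Matrix m m 𝕜) (i j : ι) :
    (((of v)ᵀ)ᴴ * S * (of v)ᵀ) i j = star (v i) ⬝ᵥ (S *ᵥ v j) := by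
  simp only [mul_apply, mulVec, dotProduct, Finset.sum_mul, Finset.mul_sum, transpose_apply,
    conjTranspose_apply, of_apply, Pi.star_apply, mul_assoc]
  exact Finset.sum_comm

end ColumnMatrix

variable {n 𝕜 : Type*} [Fintype n] [DecidableEq n] [RCLike 𝕜] {A : Matrix n n 𝕜}

namespace PosSemidef

open scoped MatrixOrder

theorem sqrt_eq_cfcSqrt (hA : A.PosSemidef) : hA.sqrt = CFC.sqrt A := by
  rw [CFC.sqrt_eq_cfc, cfc_nnreal_eq_real _ A, hA.1.cfc_eq]
  simp only [IsHermitian.cfc, Unitary.conjStarAlgAut_apply, Matrix.PosSemidef.sqrt, Real.sqrt.eq_1]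

theorem posSemidef_sqrt (hA : A.PosSemidef) : hA.sqrt.PosSemidef := by
  rw [hA.sqrt_eq_cfcSqrt]
  exact (CFC.sqrt_nonneg A).posSemidef

theorem sqrt_mul_self (hA : A.PosSemidef) : hA.sqrt * hA.sqrt = A := by
  rw [hA.sqrt_eq_cfcSqrt]
  exact CFC.sqrt_mul_sqrt_self A hA.nonneg

theorem eq_sqrt_of_mul_self_eq {B : Matrix n n 𝕜} (hB : B.PosSemidef) (hA : A.PosSemidef)
    (h : B * B = A) : B = hA.sqrt := by
  rw [hA.sqrt_eq_cfcSqrt, CFC.sqrt_unique h hB.nonneg]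

end PosSemidef

theorem PosDef.sqrt_inv_mul_mul_sqrt_inv (hA : A.PosDef) :
    hA.posSemidef.sqrt⁻¹ * A * hA.posSemidef.sqrt⁻¹ = 1 := by
  set T := hA.posSemidef.sqrt
  have hTT : T * T = A := hA.posSemidef.sqrt_mul_self
  have hT : IsUnit T.det :=
    (isUnit_iff_isUnit_det _).mp (isUnit_of_mul_isUnit_left (hTT ▸ hA.isUnit))
  calc T⁻¹ * A * T⁻¹ = T⁻¹ * (T * T) * T⁻¹ := by rw [hTT]
    _ = 1 := by rw [← Matrix.mul_assoc, nonsing_inv_mul _ hT, Matrix.one_mul, mul_nonsing_inv _ hT]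

end Matrix

theorem stmt_6_general (n d : ℕ) (v : Fin n → (Fin d → ℂ))
    (ρ : Matrix (Fin d) (Fin d) ℂ)
    (hρdef : ρ = ∑ i, Matrix.vecMulVec (v i) (star (v i)))
    (hρ : ρ.PosDef)
    (G : Matrix (Fin n) (Fin n) ℂ) (hGdef : ∀ i j, G i j = star (v i) ⬝ᵥ v j)
    (hG : G.PosSemidef)
    (M : Matrix (Fin n) (Fin n) ℂ)
    (hMdef : ∀ i j, M i j = star (v i) ⬝ᵥ ((hρ.posSemidef.sqrt)⁻¹ *ᵥ v j)) :
    M.PosSemidef ∧ M * M = G ∧ M = hG.sqrt := by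
  set V := (of v)ᵀ
  set S := hρ.posSemidef.sqrt⁻¹
  have hρV : ρ = V * Vᴴ := hρdef.trans (sum_vecMulVec_self_star v)
  have hGV : G = Vᴴ * V := by
    ext i j
    simpa [hGdef] using (conjTranspose_mul_mul_apply_of_transpose v 1 i j).symm
  have hMV : M = Vᴴ * S * V := by
    ext i j
    rw [hMdef, conjTranspose_mul_mul_apply_of_transpose]
  have hMM : M * M = G :=
    calc M * M = Vᴴ * (S * ρ * S) * V := by rw [hMV, hρV]; simp only [Matrix.mul_assoc]
      _ = G := by rw [hρ.sqrt_inv_mul_mul_sqrt_inv, Matrix.mul_one, hGV]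
  have hM : M.PosSemidef := hMV ▸ hρ.posSemidef.posSemidef_sqrt.inv.conjTranspose_mul_mul_same V
  exact ⟨hM, hMM, hM.eq_sqrt_of_mul_self_eq hG hMM⟩

theorem stmt_6 (n d : ℕ) (v : Fin n → (Fin d → ℂ))
    (hspan : Submodule.span ℂ (Set.range v) = ⊤)
    (ρ : Matrix (Fin d) (Fin d) ℂ)
    (hρdef : ρ = ∑ i, Matrix.vecMulVec (v i) (star (v i)))
    (hρ : ρ.PosDef)
    (G : Matrix (Fin n) (Fin n) ℂ) (hGdef : ∀ i j, G i j = star (v i) ⬝ᵥ v j)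
    (hG : G.PosSemidef)
    (M : Matrix (Fin n) (Fin n) ℂ)
    (hMdef : ∀ i j, M i j = star (v i) ⬝ᵥ ((hρ.posSemidef.sqrt)⁻¹ *ᵥ v j)) :
    M.PosSemidef ∧ M * M = G ∧ M = hG.sqrt :=
  stmt_6_general n d v ρ hρdef hρ G hGdef hG M hMdef
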